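/- arXiv:2506.12271 — 2 statements merged into one kernel-verified Lean document; each statement's English description precedes it below -/
import Mathlib

section
/- Let G be an oriented hypergraph and (S,c) a diagonally reduced contributor of G with unused edge set T. Then the contributor-dual assignment c*: E∖T → I×I, c*(ω(t_v)) = (h_v, t_{π_c(v)}) for v ∈ V∖S, is well defined, and (T, c*) is a diagonally reduced contributor of the incidence dual G* whose unused set is S. In particular, every diagonally reduced contributor of G has a contributor dual in G*. -/
open Matrix
open scoped Classical

noncomputable section

/-- An oriented hypergraph `G = (V, E, I, ς, ω, σ)`: `vtx = ς` assigns each incidence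
its vertex, `edg = ω` assigns each incidence its edge, and `sgn = σ` is its sign. -/
structure OHG (V E I : Type*) where
  vtx : I → V
  edg : I → E
  sgn : I → ℤˣ

/-- The incidence dual `G* = (E, V, I, ω, ς, σ)`. -/
def OHG.dual {V E I : Type*} (G : OHG V E I) : OHG E V I :=
  ⟨G.edg, G.vtx, G.sgn⟩

section Defs

variable {V E I : Type*} [Fintype V] [DecidableEq V] [Fintype E] [DecidableEq E]
  [Fintype I] [DecidableEq I]

/-- A diagonally reduced contributor `(S, c)`: `c : V∖S → I × I`, tails sit at their
vertices, tail and head share an edge, the head map is a permutation of `V∖S`, and `c`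
is edge-monic. -/
def IsDiagRed (G : OHG V E I) (S : Finset V) (c : {v : V // v ∉ S} → I × I) : Prop :=
  (∀ v, G.vtx (c v).1 = v.1) ∧ (∀ v, G.edg (c v).1 = G.edg (c v).2) ∧
    Set.BijOn (fun v : {v : V // v ∉ S} => G.vtx (c v).2) Set.univ {w : V | w ∉ S} ∧
    Function.Injective fun v : {v : V // v ∉ S} => G.edg (c v).1

/-- The unused edge set `T = E ∖ {ω (t_v) : v ∈ V∖S}` of a diagonally reduced
contributor. -/
def unusedT (G : OHG V E I) (S : Finset V) (c : {v : V // v ∉ S} → I × I) :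
    Finset E :=
  Finset.univ.filter fun e => ∀ v : {v : V // v ∉ S}, G.edg (c v).1 ≠ e

/-- The head map of a diagonally reduced contributor, extended to all of `V` by the
identity on `S`. -/
def gmapD (G : OHG V E I) (S : Finset V) (c : {v : V // v ∉ S} → I × I) : V → V :=
  fun v => if h : v ∈ S then v else G.vtx (c ⟨v, h⟩).2

/-- The orbit of `v` under iteration of `f` (for `f` a bijection of a finite type this
is the full cycle of `v`). -/
def orbitOf {α : Type*} [Fintype α] [DecidableEq α] (f : α → α) (a : α) : Finset α :=
  Finset.univ.filter fun b => ∃ n : ℕ, f^[n] a = b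

/-- The set of orbits of `f`. -/
def orbitsOf {α : Type*} [Fintype α] [DecidableEq α] (f : α → α) :
    Finset (Finset α) :=
  Finset.univ.image (orbitOf f)

/-- `ec c`: the number of orbits of `π_c` of even cardinality. -/
def ecD (G : OHG V E I) (S : Finset V) (c : {v : V // v ∉ S} → I × I) : ℕ :=
  ((orbitsOf (gmapD G S c)).filter fun O => Even O.card).card

/-- `bs c`: the number of backsteps of a diagonally reduced contributor. -/
def bsD (G : OHG V E I) (S : Finset V) (c : {v : V // v ∉ S} → I × I) : ℕ :=
  (Finset.univ.filter fun v : {v : V // v ∉ S} => (c v).1 = (c v).2).card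

/-- A negative orbit: not a single backstep, and the product of the adjacency signs
`-σ(t_v)·σ(h_v)` over the orbit is `-1`. -/
def NegOrbitD (G : OHG V E I) (S : Finset V) (c : {v : V // v ∉ S} → I × I)
    (O : Finset V) : Prop :=
  (¬ ∃ v : {v : V // v ∉ S}, O = {v.1} ∧ (c v).1 = (c v).2) ∧
    ∏ v ∈ Finset.univ.filter (fun v : {v : V // v ∉ S} => v.1 ∈ O),
      (-(G.sgn (c v).1 * G.sgn (c v).2)) = (-1 : ℤˣ)

/-- `nc c`: the number of negative orbits of a diagonally reduced contributor. -/
def ncD (G : OHG V E I) (S : Finset V) (c : {v : V // v ∉ S} → I × I) : ℕ :=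
  ((orbitsOf (gmapD G S c)).filter (NegOrbitD G S c)).card

/-- The sign `csgn c = (-1) ^ (ec c + nc c + bs c)` of a diagonally reduced
contributor. -/
def csgnD (G : OHG V E I) (S : Finset V) (c : {v : V // v ∉ S} → I × I) : ℤ :=
  (-1) ^ (ecD G S c + ncD G S c + bsD G S c)

/-- The incidence matrix of an oriented hypergraph. -/
def incM (G : OHG V E I) : Matrix V E ℤ :=
  Matrix.of fun v e =>
    ∑ i ∈ Finset.univ.filter (fun i => G.vtx i = v ∧ G.edg i = e), (G.sgn i : ℤ)

/-- The Laplacian `L = H Hᵀ` of an oriented hypergraph. -/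
def lapM (G : OHG V E I) : Matrix V V ℤ :=
  incM G * (incM G)ᵀ

end Defs

/-! Write `π` for the head permutation `π_c` of `V ∖ S` and `τ v = ω(t_v)`. Edge-monicity
makes `τ` a bijection `V ∖ S ≃ E ∖ T`, and `c*(τ v) = (h_v, t_{π v})`. In `G*` the head map
of `c*` is `τ ∘ π ∘ τ⁻¹`, a permutation of `E ∖ T`, and its tail-edge map is `π ∘ τ⁻¹`,
injective with range `V ∖ S`; hence its unused set is `S`. -/

theorem Set.bijOn_coe_univ_iff_bijective {α β : Type*} {p : β → Prop} (f : α → Subtype p) :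
    Set.BijOn (fun a => (f a : β)) Set.univ {b | p b} ↔ Function.Bijective f := by
  refine ⟨fun h => ⟨fun a b hab => h.injOn trivial trivial (congrArg Subtype.val hab),
    fun b => ?_⟩, fun h => ⟨fun a _ => (f a).2, fun a _ b _ hab => h.1 (Subtype.ext hab),
    fun b hb => ?_⟩⟩
  · obtain ⟨a, -, ha⟩ := h.surjOn b.2
    exact ⟨a, Subtype.ext ha⟩
  · obtain ⟨a, ha⟩ := h.2 ⟨b, hb⟩
    exact ⟨a, trivial, congrArg Subtype.val ha⟩

section UnusedEdges

variable {V E I : Type*} [Fintype V] [DecidableEq V] [Fintype E] [DecidableEq E]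
  {G : OHG V E I} {S : Finset V} {c : {v : V // v ∉ S} → I × I}

theorem notMem_unusedT_iff {e : E} : e ∉ unusedT G S c ↔ ∃ v, G.edg (c v).1 = e := by
  simp [unusedT]

theorem tailEdge_notMem_unusedT (v : {v : V // v ∉ S}) : G.edg (c v).1 ∉ unusedT G S c :=
  notMem_unusedT_iff.2 ⟨v, rfl⟩

end UnusedEdges

namespace IsDiagRed

variable {V E I : Type*} {G : OHG V E I} {S : Finset V} {c : {v : V // v ∉ S} → I × I}
  (hc : IsDiagRed G S c)
include hc

theorem vtx_tail (v : {v : V // v ∉ S}) : G.vtx (c v).1 = v := hc.1 v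

theorem edg_tail_eq_edg_head (v : {v : V // v ∉ S}) : G.edg (c v).1 = G.edg (c v).2 := hc.2.1 v

theorem head_notMem (v : {v : V // v ∉ S}) : G.vtx (c v).2 ∉ S :=
  hc.2.2.1.mapsTo (Set.mem_univ v)

theorem injective_tailEdge : Function.Injective fun v : {v : V // v ∉ S} => G.edg (c v).1 :=
  hc.2.2.2

def headPerm : Equiv.Perm {v : V // v ∉ S} :=
  Equiv.ofBijective (fun v => ⟨G.vtx (c v).2, hc.head_notMem v⟩)
    ((Set.bijOn_coe_univ_iff_bijective _).1 hc.2.2.1)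

@[simp]
theorem coe_headPerm (v : {v : V // v ∉ S}) : (hc.headPerm v : V) = G.vtx (c v).2 := rfl

variable [Fintype V] [DecidableEq V] [Fintype E] [DecidableEq E]

def tailEdgeEquiv : {v : V // v ∉ S} ≃ {e : E // e ∉ unusedT G S c} :=
  Equiv.ofBijective (fun v => ⟨G.edg (c v).1, tailEdge_notMem_unusedT v⟩)
    ⟨fun _ _ h => hc.injective_tailEdge (congrArg Subtype.val h), fun e => by
      obtain ⟨v, hv⟩ := notMem_unusedT_iff.1 e.2
      exact ⟨v, Subtype.ext hv⟩⟩

@[simp]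
theorem coe_tailEdgeEquiv (v : {v : V // v ∉ S}) :
    (hc.tailEdgeEquiv v : E) = G.edg (c v).1 := rfl

def dualContributor (e : {e : E // e ∉ unusedT G S c}) : I × I :=
  ((c (hc.tailEdgeEquiv.symm e)).2, (c (hc.headPerm (hc.tailEdgeEquiv.symm e))).1)

theorem dualContributor_tailEdgeEquiv (v : {v : V // v ∉ S}) :
    hc.dualContributor (hc.tailEdgeEquiv v) = ((c v).2, (c (hc.headPerm v)).1) := by
  simp [dualContributor]

theorem isDiagRed_dualContributor :
    IsDiagRed G.dual (unusedT G S c) hc.dualContributor := by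
  refine ⟨fun e => ?_, fun e => ?_, ?_, ?_⟩
  · obtain ⟨v, rfl⟩ := hc.tailEdgeEquiv.surjective e
    simp [OHG.dual, dualContributor_tailEdgeEquiv, hc.edg_tail_eq_edg_head]
  · obtain ⟨v, rfl⟩ := hc.tailEdgeEquiv.surjective e
    simp [OHG.dual, dualContributor_tailEdgeEquiv, hc.vtx_tail]
  · exact (Set.bijOn_coe_univ_iff_bijective _).2
      (hc.tailEdgeEquiv.symm.trans (hc.headPerm.trans hc.tailEdgeEquiv)).bijective
  · exact Subtype.val_injective.comp (hc.headPerm.injective.comp hc.tailEdgeEquiv.symm.injective)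

theorem unusedT_dualContributor :
    unusedT G.dual (unusedT G S c) hc.dualContributor = S := by
  ext w
  rw [← not_iff_not, notMem_unusedT_iff]
  constructor
  · rintro ⟨e, rfl⟩
    exact (hc.headPerm (hc.tailEdgeEquiv.symm e)).2
  · intro hw
    refine ⟨hc.tailEdgeEquiv (hc.headPerm.symm ⟨w, hw⟩), ?_⟩
    simp only [OHG.dual, dualContributor_tailEdgeEquiv]
    exact congrArg Subtype.val (hc.headPerm.apply_symm_apply ⟨w, hw⟩)

end IsDiagRed

variable {V E I : Type*} [Fintype V] [DecidableEq V] [Fintype E] [DecidableEq E]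
  [Fintype I] [DecidableEq I]

/-- For a diagonally reduced contributor `(S, c)` of `G` with unused
edge set `T`, the contributor-dual assignment `c* (ω (t_v)) = (h_v, t_{π_c v})` is well
defined, and `(T, c*)` is a diagonally reduced contributor of the incidence dual `G*`
whose unused set is `S`. -/
theorem diagRed_has_dual (G : OHG V E I) (S : Finset V)
    (c : {v : V // v ∉ S} → I × I) (hc : IsDiagRed G S c) :
    ∃ cd : {e : E // e ∉ unusedT G S c} → I × I,
      (∀ (v : {v : V // v ∉ S}) (he : G.edg (c v).1 ∉ unusedT G S c)
          (hp : G.vtx (c v).2 ∉ S),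
          cd ⟨G.edg (c v).1, he⟩ = ((c v).2, (c ⟨G.vtx (c v).2, hp⟩).1)) ∧
      IsDiagRed G.dual (unusedT G S c) cd ∧
      unusedT G.dual (unusedT G S c) cd = S :=
  ⟨hc.dualContributor, fun v _ _ => hc.dualContributor_tailEdgeEquiv v,
    hc.isDiagRed_dualContributor, hc.unusedT_dualContributor⟩
end
end

section
/- Let G be an oriented hypergraph, S ⊆ V, and c: V∖S → I×I a map, c(v)=(t_v,h_v), with ς(t_v)=v and ω(t_v)=ω(h_v) for all v∈V∖S such that π_c(v)=ς(h_v) is a permutation of V∖S (edge-monicity not assumed). If the reversed-pair assignment ω(h_v) ↦ (h_v, t_{π_c(v)}) is single-valued, i.e., there exists a function c′ on {ω(h_v) : v∈V∖S} with c′(ω(h_v)) = (h_v, t_{π_c(v)}) for every v∈V∖S (so that c admits a contributor-dual), then v ↦ ω(t_v) is injective on V∖S; that is, a reduced contributor that has a contributor-dual must be edge-monic. -/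
open Matrix
open scoped Classical

noncomputable section

variable {V E I : Type*} [Fintype V] [DecidableEq V] [Fintype E] [DecidableEq E]
  [Fintype I] [DecidableEq I]

theorem edgeMonic_of_has_dual_general (G : OHG V E I) (S : Finset V)
    (c : {v : V // v ∉ S} → I × I)
    (h2 : ∀ v, G.edg (c v).1 = G.edg (c v).2)
    (h3 : Set.BijOn (fun v : {v : V // v ∉ S} => G.vtx (c v).2) Set.univ
      {w : V | w ∉ S})
    (hdual : ∃ c' : {e : E // ∃ v : {v : V // v ∉ S}, G.edg (c v).2 = e} → I × I,
      ∀ (v : {v : V // v ∉ S}) (hp : G.vtx (c v).2 ∉ S),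
        c' ⟨G.edg (c v).2, ⟨v, rfl⟩⟩ = ((c v).2, (c ⟨G.vtx (c v).2, hp⟩).1)) :
    Function.Injective fun v : {v : V // v ∉ S} => G.edg (c v).1 := by
  obtain ⟨c', hc'⟩ := hdual
  have head_injective : Function.Injective fun v => (c v).2 :=
    (Set.injOn_univ.mp h3.injOn).of_comp
  -- The dual reads each head incidence off its edge, so distinct heads lie on distinct edges.
  have head_eq : (fun v => (c v).2) =
      (fun e => (c' e).1) ∘ fun v => ⟨G.edg (c v).2, v, rfl⟩ :=
    funext fun v => by simp only [Function.comp_apply, hc' v (h3.mapsTo (Set.mem_univ v))]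
  have headEdge_injective : Function.Injective
      fun v => (⟨G.edg (c v).2, v, rfl⟩ : {e : E // ∃ v, G.edg (c v).2 = e}) :=
    (head_eq ▸ head_injective).of_comp
  intro u w h
  exact headEdge_injective (Subtype.ext (by simpa only [h2] using h))

/-- Let `c : V∖S → I × I` satisfy the reduced-contributor conditions
with head map a permutation of `V∖S` (edge-monicity not assumed). If the reversed-pair
assignment `ω (h_v) ↦ (h_v, t_{π_c v})` is single-valued, i.e. there is a function `c′`
on `{ω (h_v) : v ∈ V∖S}` with `c′ (ω (h_v)) = (h_v, t_{π_c v})` for every `v` (so that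
`c` admits a contributor-dual), then `v ↦ ω (t_v)` is injective: a reduced contributor
that has a contributor-dual must be edge-monic. -/
theorem edgeMonic_of_has_dual (G : OHG V E I) (S : Finset V)
    (c : {v : V // v ∉ S} → I × I)
    (h1 : ∀ v, G.vtx (c v).1 = v.1)
    (h2 : ∀ v, G.edg (c v).1 = G.edg (c v).2)
    (h3 : Set.BijOn (fun v : {v : V // v ∉ S} => G.vtx (c v).2) Set.univ
      {w : V | w ∉ S})
    (hdual : ∃ c' : {e : E // ∃ v : {v : V // v ∉ S}, G.edg (c v).2 = e} → I × I,
      ∀ (v : {v : V // v ∉ S}) (hp : G.vtx (c v).2 ∉ S),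
        c' ⟨G.edg (c v).2, ⟨v, rfl⟩⟩ = ((c v).2, (c ⟨G.vtx (c v).2, hp⟩).1)) :
    Function.Injective fun v : {v : V // v ∉ S} => G.edg (c v).1 :=
  edgeMonic_of_has_dual_general G S c h2 h3 hdual
end
end
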